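/- For every x ∈ ℤ, every γ ≥ 0 and every N ≥ 1, E_x[e^{γ L_N(S)}] ≤ e^{γ} E_0[e^{γ L_N(S)}]; more generally, for every integer k ≥ 1, E_x[e^{γ L_{kN}(S)}] ≤ (e^{γ} E_0[e^{γ L_N(S)}])^k. -/

import Mathlib

open MeasureTheory ProbabilityTheory Filter Real

noncomputable section

open scoped Classical in
/-- Indicator (as a real number) of a proposition. -/
noncomputable def ind (P : Prop) : ℝ := if P then 1 else 0

/-- A `±1` step of the simple random walk, encoded by a `Bool`. -/
def rwStep (b : Bool) : ℤ := if b then 1 else -1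

/-- Position at time `j` of the walk started at `x` with steps `σ`. -/
def pos (x : ℤ) {N : ℕ} (σ : Fin N → Bool) (j : ℕ) : ℤ :=
  x + ∑ i ∈ Finset.univ.filter (fun i : Fin N => (i : ℕ) < j), rwStep (σ i)

/-- Local time at `0` of the walk up to time `N`: `L_N = Σ_{j=1}^N 1_{S_j = 0}`. -/
def locTime (x : ℤ) {N : ℕ} (σ : Fin N → Bool) : ℝ :=
  ∑ j ∈ Finset.range N, ind (pos x σ (j + 1) = 0)

/-- Hamiltonian `H_N^u(S) = Σ_{j=1}^N (v(j,S_j) + u 1_{S_j=0})` in environment `V`. -/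
def hamil (u : ℝ) (V : ℕ × ℤ → ℝ) (x : ℤ) {N : ℕ} (σ : Fin N → Bool) : ℝ :=
  ∑ j ∈ Finset.range N,
    (V (j + 1, pos x σ (j + 1)) + u * ind (pos x σ (j + 1) = 0))

/-- Quenched partition function `Z_N^{β,u,q} = E_x[e^{β H_N^u(S)}]`, walk started at `x`. -/
def qZ (β u : ℝ) (V : ℕ × ℤ → ℝ) (N : ℕ) (x : ℤ) : ℝ :=
  (∑ σ : Fin N → Bool, Real.exp (β * hamil u V x σ)) / 2 ^ N

/-- Constrained partition function `Z_N(x,y;V) = E_x[e^{β H_N^u(S)} 1_{S_N=y}]`. -/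
def qZc (β u : ℝ) (V : ℕ × ℤ → ℝ) (N : ℕ) (x y : ℤ) : ℝ :=
  (∑ σ : Fin N → Bool, ind (pos x σ N = y) * Real.exp (β * hamil u V x σ)) / 2 ^ N

/-- Homogeneous pinning partition function `E_x[e^{γ L_N(S)}]`. -/
def homZ (γ : ℝ) (N : ℕ) (x : ℤ) : ℝ :=
  (∑ σ : Fin N → Bool, Real.exp (γ * locTime x σ)) / 2 ^ N

/-- Space-time shift of the environment: `(θ_{n,y}V)(k,z) = V(k+n, z+y)`. -/
def envShift (n : ℕ) (y : ℤ) (V : ℕ × ℤ → ℝ) : ℕ × ℤ → ℝ :=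
  fun p => V (p.1 + n, p.2 + y)

/-- Log moment generating function `Λ(β) = log E^Q[e^{β v(1,0)}]` of the disorder. -/
def logMGF (Q : Measure ((ℕ × ℤ) → ℝ)) (β : ℝ) : ℝ :=
  Real.log (∫ V, Real.exp (β * V (1, 0)) ∂Q)

/-- Assumptions on the disorder law `Q`: the environment variables are i.i.d.,
with mean `0`, variance `1`, and all exponential moments finite. -/
structure EnvAssumptions (Q : Measure ((ℕ × ℤ) → ℝ)) : Prop where
  prob : IsProbabilityMeasure Q
  indep : iIndepFun (fun p (V : (ℕ × ℤ) → ℝ) => V p) Q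
  ident : ∀ p : ℕ × ℤ, IdentDistrib (fun V : (ℕ × ℤ) → ℝ => V p)
      (fun V : (ℕ × ℤ) → ℝ => V (1, 0)) Q Q
  mean_zero : ∫ V, V (1, 0) ∂Q = 0
  variance_one : ∫ V, (V (1, 0)) ^ 2 ∂Q = 1
  exp_moment : ∀ β : ℝ, Integrable (fun V : (ℕ × ℤ) → ℝ => Real.exp (β * V (1, 0))) Q


/-!
For `Z_N(x) = E_x[e^{γ L_N}]`, conditioning on the first step gives the recursion
`Z_{N+1}(x) = ½ Σ_{y = x ± 1} e^{γ 1_{y=0}} Z_N(y)`.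
In it, a step to `0` contributes `e^γ Z_N(0)` and a step to `y ≠ 0` contributes
`Z_N(y) ≤ e^γ Z_N(0)` by induction on `N`; since `N ↦ Z_N(0)` is nondecreasing, this closes the
induction. The Markov property at time `N` gives
`Z_{N + M}(x) ≤ Z_N(x) · sup_y Z_M(y)`, and iterating it with the first bound yields the `k`-fold one.
-/

lemma ind_nonneg (P : Prop) : 0 ≤ ind P := by
  unfold ind; split <;> norm_num

lemma pos_zero (x : ℤ) {N : ℕ} (σ : Fin N → Bool) : pos x σ 0 = x := by
  simp [pos]

lemma pos_cons_succ (x : ℤ) {N : ℕ} (b : Bool) (σ : Fin N → Bool) (j : ℕ) :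
    pos x (Fin.cons b σ) (j + 1) = pos (x + rwStep b) σ j := by
  unfold pos
  rw [Finset.sum_filter, Finset.sum_filter, Fin.sum_univ_succ]
  simp [add_assoc]

lemma locTime_nonneg (x : ℤ) {N : ℕ} (σ : Fin N → Bool) : 0 ≤ locTime x σ :=
  Finset.sum_nonneg fun _ _ => ind_nonneg _

lemma locTime_cons (x : ℤ) {N : ℕ} (b : Bool) (σ : Fin N → Bool) :
    locTime x (Fin.cons b σ) = ind (x + rwStep b = 0) + locTime (x + rwStep b) σ := by
  unfold locTime
  simp only [Finset.sum_range_succ', pos_cons_succ, pos_zero]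
  ring

lemma homZ_pos (γ : ℝ) (N : ℕ) (x : ℤ) : 0 < homZ γ N x :=
  div_pos (Finset.sum_pos (fun _ _ => Real.exp_pos _) Finset.univ_nonempty) (by positivity)

lemma one_le_homZ {γ : ℝ} (hγ : 0 ≤ γ) (N : ℕ) (x : ℤ) : 1 ≤ homZ γ N x := by
  have hcard : ∑ _σ : Fin N → Bool, (1 : ℝ) = 2 ^ N := by simp
  rw [homZ, le_div_iff₀ (by positivity), one_mul, ← hcard]
  exact Finset.sum_le_sum fun σ _ => Real.one_le_exp (mul_nonneg hγ (locTime_nonneg x σ))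

lemma homZ_zero (γ : ℝ) (x : ℤ) : homZ γ 0 x = 1 := by
  simp [homZ, locTime]

lemma homZ_succ (γ : ℝ) (N : ℕ) (x : ℤ) :
    homZ γ (N + 1) x =
      (Real.exp (γ * ind (x + 1 = 0)) * homZ γ N (x + 1) +
        Real.exp (γ * ind (x - 1 = 0)) * homZ γ N (x - 1)) / 2 := by
  have hsplit : ∑ σ : Fin (N + 1) → Bool, Real.exp (γ * locTime x σ)
      = ∑ b : Bool, Real.exp (γ * ind (x + rwStep b = 0)) *
          ∑ τ : Fin N → Bool, Real.exp (γ * locTime (x + rwStep b) τ) := by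
    rw [← (Fin.consEquiv fun _ => Bool).sum_comp, Fintype.sum_prod_type]
    change ∑ b, ∑ τ, Real.exp (γ * locTime x (Fin.cons b τ)) = _
    simp only [locTime_cons, mul_add, Real.exp_add, Finset.mul_sum]
  rw [homZ, hsplit, Fintype.sum_bool, homZ, homZ, pow_succ]
  simp only [rwStep, if_true, Bool.false_eq_true, if_false, ← sub_eq_add_neg]
  field_simp

lemma homZ_le_homZ_succ {γ : ℝ} (hγ : 0 ≤ γ) (N : ℕ) (x : ℤ) :
    homZ γ N x ≤ homZ γ (N + 1) x := by
  induction N generalizing x with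
  | zero => rw [homZ_zero]; exact one_le_homZ hγ 1 x
  | succ N ih =>
    rw [homZ_succ γ N, homZ_succ γ (N + 1)]
    gcongr <;> apply ih

lemma homZ_add_le_mul {γ B : ℝ} {M : ℕ} (hB : ∀ y, homZ γ M y ≤ B) (N : ℕ) (x : ℤ) :
    homZ γ (N + M) x ≤ homZ γ N x * B := by
  induction N generalizing x with
  | zero => simpa [homZ_zero] using hB x
  | succ N ih =>
    rw [Nat.add_right_comm, homZ_succ, homZ_succ]
    calc _ ≤ (Real.exp (γ * ind (x + 1 = 0)) * (homZ γ N (x + 1) * B) +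
            Real.exp (γ * ind (x - 1 = 0)) * (homZ γ N (x - 1) * B)) / 2 := by
          gcongr <;> apply ih
      _ = _ := by ring

lemma homZ_le_exp_mul_homZ_zero {γ : ℝ} (hγ : 0 ≤ γ) (N : ℕ) (x : ℤ) :
    homZ γ N x ≤ Real.exp γ * homZ γ N 0 := by
  induction N generalizing x with
  | zero => simpa [homZ_zero] using Real.one_le_exp hγ
  | succ N ih =>
    have hstep : ∀ y : ℤ, Real.exp (γ * ind (y = 0)) * homZ γ N y ≤ Real.exp γ * homZ γ N 0 := by
      intro y
      by_cases hy : y = 0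
      · simp [hy, ind]
      · simpa [hy, ind] using ih y
    calc homZ γ (N + 1) x ≤ Real.exp γ * homZ γ N 0 := by
          rw [homZ_succ]; linarith [hstep (x + 1), hstep (x - 1)]
      _ ≤ Real.exp γ * homZ γ (N + 1) 0 := by gcongr; exact homZ_le_homZ_succ hγ N 0

lemma homZ_mul_le_pow {γ : ℝ} (hγ : 0 ≤ γ) (N k : ℕ) (x : ℤ) :
    homZ γ (k * N) x ≤ (Real.exp γ * homZ γ N 0) ^ k := by
  induction k generalizing x with
  | zero => simp [homZ_zero]
  | succ k ih =>
    calc homZ γ ((k + 1) * N) x = homZ γ (N + k * N) x := by ring_nf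
      _ ≤ homZ γ N x * (Real.exp γ * homZ γ N 0) ^ k := homZ_add_le_mul ih N x
      _ ≤ Real.exp γ * homZ γ N 0 * (Real.exp γ * homZ γ N 0) ^ k := by
          gcongr
          · exact pow_nonneg (mul_pos (Real.exp_pos γ) (homZ_pos γ N 0)).le k
          · exact homZ_le_exp_mul_homZ_zero hγ N x
      _ = (Real.exp γ * homZ γ N 0) ^ (k + 1) := (pow_succ' _ _).symm

theorem homZ_starting_point_bound_general (x : ℤ) (γ : ℝ) (hγ : 0 ≤ γ) (N : ℕ) :
    homZ γ N x ≤ Real.exp γ * homZ γ N 0 ∧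
    ∀ k : ℕ, 1 ≤ k → homZ γ (k * N) x ≤ (Real.exp γ * homZ γ N 0) ^ k :=
  ⟨homZ_le_exp_mul_homZ_zero hγ N x, fun k _ => homZ_mul_le_pow hγ N k x⟩

/-- For every `x ∈ ℤ`, `γ ≥ 0` and `N ≥ 1`,
`E_x[e^{γ L_N}] ≤ e^γ E₀[e^{γ L_N}]`; more generally, for every `k ≥ 1`,
`E_x[e^{γ L_{kN}}] ≤ (e^γ E₀[e^{γ L_N}])^k`. -/
theorem homZ_starting_point_bound (x : ℤ) (γ : ℝ) (hγ : 0 ≤ γ) (N : ℕ) (hN : 1 ≤ N) :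
    homZ γ N x ≤ Real.exp γ * homZ γ N 0 ∧
    ∀ k : ℕ, 1 ≤ k → homZ γ (k * N) x ≤ (Real.exp γ * homZ γ N 0) ^ k :=
  homZ_starting_point_bound_general x γ hγ N

end
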